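/- Fix constants c > 0 and α > 0 and let p = p(n) = c n^{-1/α}(1 + o(1)). Let H be a strictly balanced graph with 0 < v_H ≤ n vertices, e_H > 0 edges, no isolated vertices, and density d_H = e_H/v_H < α. Let W be the number of copies of H in G(n,p). Then E(W) → ∞, and there exists a constant C > 0 such that for every ε > 0 and all sufficiently large n, P(|W/E(W) − 1| ≥ ε) ≤ C ε^{-2} n^{-γ}, where γ = min_{k ∈ K} (ℓ_k − k/α) > 0, K is the set of k ≥ 1 for which two copies of H in K_n can share exactly k edges, and ℓ_k is the minimum number of vertices incident to such k shared edges. -/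

import Mathlib

open MeasureTheory ProbabilityTheory Filter
open scoped ENNReal NNReal

/-- The Bernoulli distribution on `Bool` with success probability `p`. -/
noncomputable def bernoulliB (p : ℝ) : Measure Bool :=
  ENNReal.ofReal p • Measure.dirac true + ENNReal.ofReal (1 - p) • Measure.dirac false

instance (p : ℝ) : IsFiniteMeasure (bernoulliB p) := by
  constructor
  simp only [bernoulliB, Measure.add_apply, Measure.smul_apply, smul_eq_mul]
  finiteness

/-- The sample space of the Erdős–Rényi random graph `G(n, p)`: one Boolean coordinate for
each potential edge (non-diagonal unordered pair) of the complete graph on `n` vertices. -/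
abbrev EdgeSpace (n : ℕ) := ({e : Sym2 (Fin n) // ¬ e.IsDiag} → Bool)

/-- The Erdős–Rényi measure: each potential edge is present independently with
probability `p`. -/
noncomputable def erMeasure (n : ℕ) (p : ℝ) : Measure (EdgeSpace n) :=
  Measure.pi fun _ => bernoulliB p

/-- The random graph determined by a point of the sample space. -/
def erGraph {n : ℕ} (ω : EdgeSpace n) : SimpleGraph (Fin n) :=
  SimpleGraph.fromEdgeSet {e | ∃ h : ¬ e.IsDiag, ω ⟨e, h⟩ = true}

/-- `B` is a copy of `H` in the complete graph `K_n`: a subgraph of `K_n`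
isomorphic to `H`. -/
def IsCopy {n : ℕ} {V : Type*} (H : SimpleGraph V)
    (B : (⊤ : SimpleGraph (Fin n)).Subgraph) : Prop :=
  Nonempty (B.coe ≃g H)

/-- The number of copies of `H` in `K_n` all of whose edges are present in `G`. -/
noncomputable def numCopies {n : ℕ} {V : Type*} (H : SimpleGraph V)
    (G : SimpleGraph (Fin n)) : ℕ :=
  Set.ncard {B : (⊤ : SimpleGraph (Fin n)).Subgraph | IsCopy H B ∧ B.edgeSet ⊆ G.edgeSet}

/-- The number of edges shared by two subgraphs of `K_n`. -/
noncomputable def sharedEdges {n : ℕ} (A B : (⊤ : SimpleGraph (Fin n)).Subgraph) : ℕ :=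
  (A ⊓ B).edgeSet.ncard

/-- The number of vertices incident to the edges shared by two subgraphs of `K_n`. -/
noncomputable def sharedVerts {n : ℕ} (A B : (⊤ : SimpleGraph (Fin n)).Subgraph) : ℕ :=
  (A ⊓ B).support.ncard

/-- `K_{i,j}`: the set of possible numbers `k ≥ 1` of shared edges between a copy of `Hi`
and a copy of `Hj` in `K_n`. -/
def sharedK {V W : Type*} (Hi : SimpleGraph V) (Hj : SimpleGraph W) (n : ℕ) : Set ℕ :=
  {k | 1 ≤ k ∧ ∃ A B : (⊤ : SimpleGraph (Fin n)).Subgraph,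
    IsCopy Hi A ∧ IsCopy Hj B ∧ sharedEdges A B = k}

/-- `ℓ_{k,i,j}`: the minimum number of vertices incident to `k` shared edges between a copy
of `Hi` and a copy of `Hj` in `K_n` (`0` if no such pair of copies exists, by the convention
`sInf ∅ = 0` in `ℕ`). -/
noncomputable def minSharedVerts {V W : Type*} (Hi : SimpleGraph V) (Hj : SimpleGraph W)
    (n k : ℕ) : ℕ :=
  sInf {m | ∃ A B : (⊤ : SimpleGraph (Fin n)).Subgraph,
    IsCopy Hi A ∧ IsCopy Hj B ∧ sharedEdges A B = k ∧ sharedVerts A B = m}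

/-- A graph `H` is *strictly balanced* if every proper subgraph has density strictly
smaller than the density `e_H / v_H` of `H`. -/
def StrictlyBalanced {V : Type*} [Fintype V] (H : SimpleGraph V) : Prop :=
  ∀ B : H.Subgraph, B ≠ ⊤ → B.edgeSet.Nonempty →
    (B.edgeSet.ncard : ℝ) / (B.verts.ncard : ℝ)
      < (H.edgeSet.ncard : ℝ) / (Fintype.card V : ℝ)


/-!
The second moment method. Writing `W` as a sum of indicators over the `N ≍ n^{v_H}` copies of
`H` in `K_n` gives `E W = N p^{e_H} ≳ n^{v_H - e_H/α} → ∞`. Edge-disjoint copies are independent,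
so only pairs of copies sharing `k ≥ 1` edges contribute to `Var W`: there are `O(n^{2v_H - ℓ_k})`
of them, each contributing `p^{2e_H - k} = O(n^{k/α}) p^{2e_H}`, whence
`Var W = O(n^{-γ}) (E W)^2`, and Chebyshev's inequality gives the bound. Strict balance makes the
shared part of two copies at most as dense as `H`, so `k / ℓ_k ≤ d_H < α`, i.e. `γ > 0`.
-/

open SimpleGraph Finset

section ErdosRenyi
variable {n : ℕ} {p : ℝ}

lemma isProbabilityMeasure_bernoulliB (h0 : 0 ≤ p) (h1 : p ≤ 1) :
    IsProbabilityMeasure (bernoulliB p) := by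
  constructor
  simp [bernoulliB, ← ENNReal.ofReal_add h0 (sub_nonneg.2 h1)]

lemma isProbabilityMeasure_erMeasure (h0 : 0 ≤ p) (h1 : p ≤ 1) :
    IsProbabilityMeasure (erMeasure n p) :=
  have := isProbabilityMeasure_bernoulliB h0 h1
  inferInstanceAs (IsProbabilityMeasure (Measure.pi _))

lemma subset_edgeSet_erGraph_iff {s : Set (Sym2 (Fin n))} {ω : EdgeSpace n}
    (hs : s ⊆ (⊤ : SimpleGraph (Fin n)).edgeSet) :
    s ⊆ (erGraph ω).edgeSet ↔ ∀ e : {e : Sym2 (Fin n) // ¬ e.IsDiag}, ↑e ∈ s → ω e = true := by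
  have hdiag : ∀ e ∈ s, ¬ e.IsDiag := fun e he => not_isDiag_of_mem_edgeSet _ (hs he)
  simp only [erGraph, edgeSet_fromEdgeSet, Set.subset_def, Set.mem_sdiff, Set.mem_ofPred_eq]
  exact ⟨fun h e he => (h e he).1.2,
    fun h e he => ⟨⟨hdiag e he, h ⟨e, hdiag e he⟩ he⟩, hdiag e he⟩⟩

lemma erMeasure_real_subset_edgeSet (h0 : 0 ≤ p) (h1 : p ≤ 1) {s : Set (Sym2 (Fin n))}
    (hs : s ⊆ (⊤ : SimpleGraph (Fin n)).edgeSet) :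
    (erMeasure n p).real {ω | s ⊆ (erGraph ω).edgeSet} = p ^ s.ncard := by
  classical
  have := isProbabilityMeasure_bernoulliB h0 h1
  have hset : {ω : EdgeSpace n | s ⊆ (erGraph ω).edgeSet}
      = Set.univ.pi fun e : {e : Sym2 (Fin n) // ¬ e.IsDiag} =>
        if (e : Sym2 (Fin n)) ∈ s then {true} else Set.univ := by
    ext ω
    simp only [Set.mem_ofPred_eq, subset_edgeSet_erGraph_iff hs, Set.mem_pi, Set.mem_univ,
      true_implies]
    refine forall_congr' fun e => ?_
    split_ifs <;> simp [*]
  have hcard : #{e : {e : Sym2 (Fin n) // ¬ e.IsDiag} | ↑e ∈ s} = s.ncard := by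
    rw [← Fintype.card_subtype, ← Nat.card_eq_fintype_card, ← Nat.card_coe_set_eq]
    exact Nat.card_congr (Equiv.subtypeSubtypeEquivSubtype fun he =>
      not_isDiag_of_mem_edgeSet _ (hs he))
  have hfactor : ∀ e : {e : Sym2 (Fin n) // ¬ e.IsDiag},
      bernoulliB p (if (e : Sym2 (Fin n)) ∈ s then {true} else Set.univ)
        = if (e : Sym2 (Fin n)) ∈ s then ENNReal.ofReal p else 1 := fun e => by
    split_ifs
    · simp [bernoulliB]
    · exact measure_univ
  simp only [measureReal_def, hset, erMeasure, Measure.pi_pi, hfactor, prod_ite, prod_const_one,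
    mul_one, prod_const, hcard, ENNReal.toReal_pow, ENNReal.toReal_ofReal h0]

def edgesPresent (A : (⊤ : SimpleGraph (Fin n)).Subgraph) : Set (EdgeSpace n) :=
  {ω | A.edgeSet ⊆ (erGraph ω).edgeSet}

lemma erMeasure_real_edgesPresent (h0 : 0 ≤ p) (h1 : p ≤ 1)
    (A : (⊤ : SimpleGraph (Fin n)).Subgraph) :
    (erMeasure n p).real (edgesPresent A) = p ^ A.edgeSet.ncard :=
  erMeasure_real_subset_edgeSet h0 h1 A.edgeSet_subset

lemma erMeasure_real_edgesPresent_inter (h0 : 0 ≤ p) (h1 : p ≤ 1)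
    (A B : (⊤ : SimpleGraph (Fin n)).Subgraph) :
    (erMeasure n p).real (edgesPresent A ∩ edgesPresent B)
      = p ^ (A.edgeSet.ncard + B.edgeSet.ncard - sharedEdges A B) := by
  have hset : edgesPresent A ∩ edgesPresent B
      = {ω | A.edgeSet ∪ B.edgeSet ⊆ (erGraph ω).edgeSet} := by
    ext ω
    simp [edgesPresent, Set.union_subset_iff]
  rw [hset, erMeasure_real_subset_edgeSet h0 h1 (Set.union_subset A.edgeSet_subset
    B.edgeSet_subset), sharedEdges, Subgraph.edgeSet_inf,
    ← Set.ncard_union_add_ncard_inter _ _ (Set.toFinite _) (Set.toFinite _), Nat.add_sub_cancel]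

variable (𝒜 : Finset (⊤ : SimpleGraph (Fin n)).Subgraph)

lemma integral_sum_indicator_edgesPresent (h0 : 0 ≤ p) (h1 : p ≤ 1) :
    ∫ ω, ∑ A ∈ 𝒜, (edgesPresent A).indicator 1 ω ∂erMeasure n p
      = ∑ A ∈ 𝒜, p ^ A.edgeSet.ncard := by
  have := isProbabilityMeasure_erMeasure (n := n) h0 h1
  rw [integral_finsetSum _ fun _ _ => Integrable.of_finite]
  simp only [integral_indicator_one MeasurableSet.of_discrete, erMeasure_real_edgesPresent h0 h1]

lemma integral_sq_sum_indicator_edgesPresent (h0 : 0 ≤ p) (h1 : p ≤ 1) :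
    ∫ ω, (∑ A ∈ 𝒜, (edgesPresent A).indicator 1 ω) ^ 2 ∂erMeasure n p
      = ∑ AB ∈ 𝒜 ×ˢ 𝒜,
          p ^ (AB.1.edgeSet.ncard + AB.2.edgeSet.ncard - sharedEdges AB.1 AB.2) := by
  have := isProbabilityMeasure_erMeasure (n := n) h0 h1
  have hsq : ∀ ω, (∑ A ∈ 𝒜, (edgesPresent A).indicator (1 : EdgeSpace n → ℝ) ω) ^ 2
      = ∑ AB ∈ 𝒜 ×ˢ 𝒜, (edgesPresent AB.1 ∩ edgesPresent AB.2).indicator 1 ω := fun ω => by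
    simp only [sq, sum_mul_sum, ← sum_product', Set.inter_indicator_one, Pi.mul_apply]
  simp only [hsq]
  rw [integral_finsetSum _ fun _ _ => Integrable.of_finite]
  simp only [integral_indicator_one MeasurableSet.of_discrete,
    erMeasure_real_edgesPresent_inter h0 h1]

lemma variance_sum_indicator_edgesPresent_le (h0 : 0 ≤ p) (h1 : p ≤ 1) :
    variance (fun ω => ∑ A ∈ 𝒜, (edgesPresent A).indicator (1 : EdgeSpace n → ℝ) ω)
        (erMeasure n p)
      ≤ ∑ AB ∈ 𝒜 ×ˢ 𝒜 with sharedEdges AB.1 AB.2 ≠ 0,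
          p ^ (AB.1.edgeSet.ncard + AB.2.edgeSet.ncard - sharedEdges AB.1 AB.2) := by
  have := isProbabilityMeasure_erMeasure (n := n) h0 h1
  rw [variance_eq_sub MemLp.of_discrete]
  simp only [Pi.pow_apply]
  rw [integral_sq_sum_indicator_edgesPresent 𝒜 h0 h1, integral_sum_indicator_edgesPresent 𝒜 h0 h1,
    sq, sum_mul_sum, ← sum_product', ← sum_sub_distrib, sum_filter]
  simp only [← pow_add]
  refine sum_le_sum fun AB _ => ?_
  split_ifs with hk
  · exact sub_le_self _ (by positivity)
  · rw [not_not.1 hk, Nat.sub_zero, sub_self]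

end ErdosRenyi

lemma measureReal_abs_div_sub_one_ge_le {Ω : Type*} [MeasurableSpace Ω] {μ : Measure Ω}
    [IsFiniteMeasure μ] {X : Ω → ℝ} (hX : MemLp X 2 μ) (hm : 0 < μ[X]) {ε : ℝ} (hε : 0 < ε) :
    μ.real {ω | ε ≤ |X ω / μ[X] - 1|} ≤ variance X μ / (ε * μ[X]) ^ 2 := by
  have hset : {ω | ε ≤ |X ω / μ[X] - 1|} = {ω | ε * μ[X] ≤ |X ω - μ[X]|} := by
    ext ω
    rw [Set.mem_ofPred_eq, Set.mem_ofPred_eq, ← mul_le_mul_iff_left₀ hm, ← abs_of_pos hm,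
      ← abs_mul, abs_of_pos hm, sub_mul, div_mul_cancel₀ _ hm.ne', one_mul]
  rw [hset, measureReal_def]
  exact ENNReal.toReal_le_of_le_ofReal (div_nonneg (variance_nonneg _ _) (sq_nonneg _))
    (meas_ge_le_variance_div_sq hX (by positivity))

lemma card_filter_ncard_range_le {α β : Type*} [Fintype α] [DecidableEq α] [Fintype β]
    [DecidableEq β] {s : ℕ} (hs : s ≤ Fintype.card β) :
    #{h : α → β | (Set.range h).ncard ≤ s} ≤ (Fintype.card β).choose s * s ^ Fintype.card α := by
  have hsub : ({h : α → β | (Set.range h).ncard ≤ s} : Finset (α → β))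
      ⊆ (powersetCard s univ).biUnion fun U => Fintype.piFinset fun _ => U := by
    intro h hh
    rw [mem_filter, Set.ncard_eq_toFinset_card'] at hh
    obtain ⟨U, hU, hUcard⟩ := exists_superset_card_eq hh.2 hs
    exact mem_biUnion.2 ⟨U, mem_powersetCard_univ.2 hUcard,
      Fintype.mem_piFinset.2 fun a => hU (by simp)⟩
  calc _ ≤ _ := card_le_card hsub
    _ ≤ ∑ U ∈ powersetCard s univ, #(Fintype.piFinset fun (_ : α) => U) := card_biUnion_le
    _ = _ := by
      rw [sum_congr rfl fun U hU => by
        rw [Fintype.card_piFinset, prod_const, mem_powersetCard_univ.1 hU, card_univ],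
        sum_const, card_powersetCard, card_univ, smul_eq_mul]

namespace SimpleGraph

variable {V W : Type*} {G : SimpleGraph V} {G' : SimpleGraph W}

lemma Subgraph.support_map (f : G →g G') (S : G.Subgraph) :
    (S.map f).support = f '' S.support := by
  ext x
  simp only [Subgraph.mem_support, Subgraph.map_adj, Relation.Map, Set.mem_image]
  constructor
  · rintro ⟨_, u, w, h, rfl, rfl⟩
    exact ⟨u, ⟨w, h⟩, rfl⟩
  · rintro ⟨u, ⟨w, h⟩, rfl⟩
    exact ⟨f w, u, w, h, rfl, rfl⟩

lemma Subgraph.map_comap_eq_of_le {f : G →g G'} {S : G'.Subgraph}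
    (h : S ≤ (⊤ : G.Subgraph).map f) : (S.comap f).map f = S := by
  refine le_antisymm ((Subgraph.map_le_iff_le_comap _ _ _).2 le_rfl) ⟨fun x hx => ?_, ?_⟩
  · obtain ⟨a, -, rfl⟩ := h.1 hx
    exact ⟨a, hx, rfl⟩
  · intro x y hxy
    obtain ⟨a, b, hab, rfl, rfl⟩ := h.2 hxy
    exact ⟨a, b, ⟨hab, hxy⟩, rfl, rfl⟩

lemma Copy.verts_toSubgraph (f : Copy G G') : f.toSubgraph.verts = Set.range f := by
  simp [Set.image_univ]

lemma Copy.ncard_verts_toSubgraph [Finite V] (f : Copy G G') :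
    f.toSubgraph.verts.ncard = Nat.card V := by
  rw [f.verts_toSubgraph, ← Set.image_univ,
    Set.ncard_image_of_injective _ (show Function.Injective f from f.injective), Set.ncard_univ]

lemma Copy.ncard_edgeSet_toSubgraph (f : Copy G G') :
    f.toSubgraph.edgeSet.ncard = G.edgeSet.ncard := by
  rw [Subgraph.edgeSet_map, Subgraph.edgeSet_top,
    Set.ncard_image_of_injective _ (Sym2.map.injective f.injective)]

def Copy.ofEmbeddingTop (f : V ↪ W) : Copy G (⊤ : SimpleGraph W) :=
  (Embedding.completeGraph f).toCopy.comp (Copy.ofLE G ⊤ le_top)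

@[simp] lemma Copy.coe_ofEmbeddingTop (f : V ↪ W) : ⇑(Copy.ofEmbeddingTop (G := G) f) = f :=
  rfl

end SimpleGraph

lemma StrictlyBalanced.ncard_edgeSet_mul_le {V : Type*} [Fintype V] {H : SimpleGraph V}
    (hH : StrictlyBalanced H) (D : H.Subgraph) :
    D.edgeSet.ncard * Fintype.card V ≤ H.edgeSet.ncard * D.support.ncard := by
  rcases D.edgeSet.eq_empty_or_nonempty with hD | hD
  · simp [hD]
  set D' := D.induce D.support
  have hE : D'.edgeSet = D.edgeSet := by
    ext e
    induction e with
    | _ x y => exact ⟨fun h => h.2.2, fun h => ⟨⟨y, h⟩, ⟨x, h.symm⟩, h⟩⟩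
  have hV : D'.verts = D.support := rfl
  by_cases htop : D' = ⊤
  · rw [← hE, ← hV, htop, Subgraph.edgeSet_top, Subgraph.verts_top, Set.ncard_univ,
      Nat.card_eq_fintype_card, mul_comm]
  have hsupport : 0 < D.support.ncard := by
    obtain ⟨e, he⟩ := hD
    induction e with
    | _ x y => exact Set.ncard_pos (Set.toFinite _) |>.2 ⟨x, y, he⟩
  have hcard : 0 < Fintype.card V :=
    Fintype.card_pos_iff.2 ⟨(Set.nonempty_of_ncard_ne_zero hsupport.ne').some⟩
  have := hH D' htop (hE ▸ hD)
  rw [hE, hV, div_lt_div_iff₀ (by exact_mod_cast hsupport) (by exact_mod_cast hcard)] at this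
  exact_mod_cast this.le

section SharedEdges
variable {V : Type*} {n : ℕ} {H : SimpleGraph V} {A B : (⊤ : SimpleGraph (Fin n)).Subgraph}

lemma isCopy_iff_exists_toSubgraph_eq :
    IsCopy H A ↔ ∃ f : Copy H (⊤ : SimpleGraph (Fin n)), f.toSubgraph = A := by
  rw [IsCopy, ← Set.mem_range, Copy.range_toSubgraph, Set.mem_ofPred_eq]
  exact ⟨fun ⟨φ⟩ => ⟨φ.symm⟩, fun ⟨φ⟩ => ⟨φ.symm⟩⟩

lemma IsCopy.ncard_edgeSet (hA : IsCopy H A) : A.edgeSet.ncard = H.edgeSet.ncard := by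
  obtain ⟨f, rfl⟩ := isCopy_iff_exists_toSubgraph_eq.1 hA
  exact f.ncard_edgeSet_toSubgraph

/-- Pulled back along the copy `A`, the shared part of `A` and `B` is a subgraph of `H`. -/
lemma IsCopy.sharedEdges_mul_le [Fintype V] (hA : IsCopy H A) (hH : StrictlyBalanced H)
    (B : (⊤ : SimpleGraph (Fin n)).Subgraph) :
    sharedEdges A B * Fintype.card V ≤ H.edgeSet.ncard * sharedVerts A B := by
  obtain ⟨f, rfl⟩ := isCopy_iff_exists_toSubgraph_eq.1 hA
  set D := (f.toSubgraph ⊓ B).comap f.toHom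
  have hmap : D.map f.toHom = f.toSubgraph ⊓ B := Subgraph.map_comap_eq_of_le inf_le_left
  have hE : sharedEdges f.toSubgraph B = D.edgeSet.ncard := by
    rw [sharedEdges, ← hmap, Subgraph.edgeSet_map,
      Set.ncard_image_of_injective _ (Sym2.map.injective f.injective)]
  have hV : sharedVerts f.toSubgraph B = D.support.ncard := by
    rw [sharedVerts, ← hmap, Subgraph.support_map, Set.ncard_image_of_injective _ f.injective]
  rw [hE, hV]
  exact hH.ncard_edgeSet_mul_le D

lemma ncard_verts_union_add_sharedVerts_le [Fintype V] (hA : IsCopy H A) (hB : IsCopy H B) :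
    (A.verts ∪ B.verts).ncard + sharedVerts A B ≤ 2 * Fintype.card V := by
  have hshared : sharedVerts A B ≤ (A.verts ∩ B.verts).ncard :=
    Set.ncard_le_ncard (fun x ⟨y, hxy⟩ => ⟨A.edge_vert hxy.1, B.edge_vert hxy.2⟩)
      (Set.toFinite _)
  have := Set.ncard_union_add_ncard_inter A.verts B.verts (Set.toFinite _) (Set.toFinite _)
  obtain ⟨f, rfl⟩ := isCopy_iff_exists_toSubgraph_eq.1 hA
  obtain ⟨g, rfl⟩ := isCopy_iff_exists_toSubgraph_eq.1 hB
  rw [f.ncard_verts_toSubgraph, g.ncard_verts_toSubgraph, Nat.card_eq_fintype_card] at this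
  omega

lemma sharedEdges_le_ncard_edgeSet (A B : (⊤ : SimpleGraph (Fin n)).Subgraph) :
    sharedEdges A B ≤ A.edgeSet.ncard := by
  rw [sharedEdges, Subgraph.edgeSet_inf]
  exact Set.ncard_le_ncard Set.inter_subset_left (Set.toFinite _)

lemma sharedVerts_pos (h : sharedEdges A B ≠ 0) : 0 < sharedVerts A B := by
  obtain ⟨e, he⟩ := Set.nonempty_of_ncard_ne_zero h
  induction e with
  | _ x y => exact Set.ncard_pos (Set.toFinite _) |>.2 ⟨x, y, he⟩

lemma sharedK_subset_Icc : sharedK H H n ⊆ Set.Icc 1 H.edgeSet.ncard := by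
  rintro k ⟨hk, A, B, hA, -, rfl⟩
  exact ⟨hk, hA.ncard_edgeSet ▸ sharedEdges_le_ncard_edgeSet A B⟩

lemma exists_sharedVerts_eq_minSharedVerts {W : Type*} {H' : SimpleGraph W} {k : ℕ}
    (hk : k ∈ sharedK H H' n) :
    ∃ A B : (⊤ : SimpleGraph (Fin n)).Subgraph, IsCopy H A ∧ IsCopy H' B ∧
      sharedEdges A B = k ∧ sharedVerts A B = minSharedVerts H H' n k := by
  obtain ⟨-, A, B, hA, hB, hk⟩ := hk
  exact Nat.sInf_mem (s := {m | ∃ A B : (⊤ : SimpleGraph (Fin n)).Subgraph,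
    IsCopy H A ∧ IsCopy H' B ∧ sharedEdges A B = k ∧ sharedVerts A B = m})
    ⟨_, A, B, hA, hB, hk, rfl⟩

lemma minSharedVerts_le_sharedVerts {W : Type*} {H' : SimpleGraph W} (hA : IsCopy H A)
    (hB : IsCopy H' B) : minSharedVerts H H' n (sharedEdges A B) ≤ sharedVerts A B :=
  Nat.sInf_le ⟨A, B, hA, hB, rfl, rfl⟩

lemma div_lt_minSharedVerts [Fintype V] (hH : StrictlyBalanced H) {α : ℝ} (hα : 0 < α)
    (hdens : (H.edgeSet.ncard : ℝ) < α * Fintype.card V) {k : ℕ} (hk : k ∈ sharedK H H n) :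
    k / α < minSharedVerts H H n k := by
  obtain ⟨A, B, hA, -, hkAB, hmin⟩ := exists_sharedVerts_eq_minSharedVerts hk
  rw [← hmin, div_lt_iff₀ hα]
  have hdensity : (k * Fintype.card V : ℝ) ≤ H.edgeSet.ncard * sharedVerts A B := by
    exact_mod_cast hkAB ▸ hA.sharedEdges_mul_le hH B
  have hshared : (0 : ℝ) < sharedVerts A B := by
    exact_mod_cast sharedVerts_pos (by have := hk.1; omega)
  have hV : (0 : ℝ) < Fintype.card V := by
    by_contra! h
    nlinarith [(H.edgeSet.ncard).cast_nonneg (α := ℝ)]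
  nlinarith

lemma finite_setOf_exists_sharedK (f : ℕ → ℝ) : {x | ∃ k ∈ sharedK H H n, x = f k}.Finite := by
  simpa only [Set.image, eq_comm] using ((Set.finite_Icc _ _).subset sharedK_subset_Icc).image f

lemma sInf_sharedK_le {α : ℝ} {k : ℕ} (hk : k ∈ sharedK H H n) :
    sInf {x : ℝ | ∃ k ∈ sharedK H H n, x = (minSharedVerts H H n k : ℝ) - (k : ℝ) / α}
      ≤ minSharedVerts H H n k - k / α :=
  csInf_le (finite_setOf_exists_sharedK _).bddBelow ⟨k, hk, rfl⟩

lemma sInf_sharedK_pos [Fintype V] (hH : StrictlyBalanced H) (he : H.edgeSet.Nonempty)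
    {α : ℝ} (hα : 0 < α) (hdens : (H.edgeSet.ncard : ℝ) < α * Fintype.card V)
    (hn : Fintype.card V ≤ n) :
    0 < sInf {x : ℝ | ∃ k ∈ sharedK H H n, x = (minSharedVerts H H n k : ℝ) - (k : ℝ) / α} := by
  obtain ⟨f⟩ :=
    Function.Embedding.nonempty_of_card_le (by simpa using hn : _ ≤ Fintype.card (Fin n))
  set A := (Copy.ofEmbeddingTop (G := H) f).toSubgraph
  have hA : IsCopy H A := isCopy_iff_exists_toSubgraph_eq.2 ⟨_, rfl⟩
  have hK : H.edgeSet.ncard ∈ sharedK H H n :=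
    ⟨(Set.ncard_pos (Set.toFinite _)).2 he, A, A, hA, hA,
      by rw [sharedEdges, inf_idem, hA.ncard_edgeSet]⟩
  obtain ⟨k, hk, hmin⟩ := Set.Nonempty.csInf_mem
    (s := {x : ℝ | ∃ k ∈ sharedK H H n, x = (minSharedVerts H H n k : ℝ) - (k : ℝ) / α})
    ⟨_, _, hK, rfl⟩ (finite_setOf_exists_sharedK _)
  rw [hmin, sub_pos]
  exact div_lt_minSharedVerts hH hα hdens hk

end SharedEdges

section CopyCounting
variable {V : Type*} {n : ℕ} {H : SimpleGraph V}

open Classical in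
noncomputable def copies (n : ℕ) (H : SimpleGraph V) :
    Finset (⊤ : SimpleGraph (Fin n)).Subgraph :=
  {A | IsCopy H A}

lemma mem_copies {A : (⊤ : SimpleGraph (Fin n)).Subgraph} : A ∈ copies n H ↔ IsCopy H A := by
  classical simp [copies]

lemma choose_le_card_copies [Fintype V] : n.choose (Fintype.card V) ≤ #(copies n H) := by
  classical
  have hsurj : Set.SurjOn (fun A : (⊤ : SimpleGraph (Fin n)).Subgraph => A.verts.toFinset)
      (copies n H) ↑(powersetCard (Fintype.card V) (univ : Finset (Fin n))) := by
    intro s hs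
    rw [mem_coe, mem_powersetCard_univ] at hs
    let f : V ↪ Fin n := (Fintype.equivFin V).toEmbedding.trans (s.orderEmbOfFin hs).toEmbedding
    refine ⟨(Copy.ofEmbeddingTop (G := H) f).toSubgraph,
      mem_copies.2 (isCopy_iff_exists_toSubgraph_eq.2 ⟨_, rfl⟩), ?_⟩
    have hrange : Set.range f = s := by
      rw [← Finset.range_orderEmbOfFin s hs]
      exact (Fintype.equivFin V).surjective.range_comp (s.orderEmbOfFin hs)
    simp [hrange]
  simpa using card_le_card_of_surjOn _ hsurj

open Classical in
noncomputable def pairsSharing (n : ℕ) (H : SimpleGraph V) (k : ℕ) :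
    Finset ((⊤ : SimpleGraph (Fin n)).Subgraph × (⊤ : SimpleGraph (Fin n)).Subgraph) :=
  {AB ∈ copies n H ×ˢ copies n H | sharedEdges AB.1 AB.2 = k}

lemma pairsSharing_eq_empty {k : ℕ} (hk₁ : 1 ≤ k) (hk : k ∉ sharedK H H n) :
    pairsSharing n H k = ∅ := by
  classical
  refine filter_eq_empty_iff.2 fun AB hAB hkAB => hk ⟨hk₁, AB.1, AB.2, ?_⟩
  simp only [mem_product, mem_copies] at hAB
  exact ⟨hAB.1, hAB.2, hkAB⟩

/-- A pair of copies sharing `k` edges is a pair of injections `V → Fin n` whose ranges cover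
at most `2 v_H - ℓ_k` vertices. -/
lemma card_pairsSharing_le [Fintype V] {k : ℕ} (hn : 2 * Fintype.card V ≤ n) :
    #(pairsSharing n H k)
      ≤ n ^ (2 * Fintype.card V - minSharedVerts H H n k)
          * (2 * Fintype.card V) ^ (2 * Fintype.card V) := by
  classical
  set s := 2 * Fintype.card V - minSharedVerts H H n k
  let T : Finset (Copy H (⊤ : SimpleGraph (Fin n)) × Copy H (⊤ : SimpleGraph (Fin n))) :=
    {fg | (Set.range fg.1 ∪ Set.range fg.2).ncard ≤ s}
  have hpairs : pairsSharing n H k ⊆ T.image fun fg => (fg.1.toSubgraph, fg.2.toSubgraph) := by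
    rintro ⟨A, B⟩ hAB
    simp only [pairsSharing, mem_filter, mem_product, mem_copies] at hAB
    obtain ⟨⟨hA, hB⟩, rfl⟩ := hAB
    have hmin := minSharedVerts_le_sharedVerts hA hB
    have hunion := ncard_verts_union_add_sharedVerts_le hA hB
    obtain ⟨f, rfl⟩ := isCopy_iff_exists_toSubgraph_eq.1 hA
    obtain ⟨g, rfl⟩ := isCopy_iff_exists_toSubgraph_eq.1 hB
    refine mem_image.2 ⟨(f, g), mem_filter.2 ⟨mem_univ _, ?_⟩, rfl⟩
    rw [f.verts_toSubgraph, g.verts_toSubgraph] at hunion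
    dsimp only
    omega
  have hT : #T ≤ #{h : V ⊕ V → Fin n | (Set.range h).ncard ≤ s} := by
    refine card_le_card_of_injOn (fun fg => Sum.elim fg.1 fg.2) (fun fg hfg => ?_) ?_
    · simpa [T, Set.Sum.elim_range] using hfg
    · rintro ⟨f, g⟩ - ⟨f', g'⟩ - h
      have hf : ⇑f = ⇑f' := funext fun a => congrFun h (.inl a)
      have hg : ⇑g = ⇑g' := funext fun a => congrFun h (.inr a)
      rw [DFunLike.coe_injective hf, DFunLike.coe_injective hg]
  calc #(pairsSharing n H k) ≤ #T := (card_le_card hpairs).trans card_image_le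
    _ ≤ n.choose s * s ^ (2 * Fintype.card V) := by
      simpa [two_mul] using hT.trans (card_filter_ncard_range_le (by simp; omega))
    _ ≤ n ^ s * (2 * Fintype.card V) ^ (2 * Fintype.card V) :=
      Nat.mul_le_mul (Nat.choose_le_pow n s) (Nat.pow_le_pow_left (by omega) _)

end CopyCounting

section CopyMoments
variable {V : Type*} {n : ℕ} {H : SimpleGraph V} {p : ℝ}

lemma numCopies_erGraph_eq_sum (ω : EdgeSpace n) :
    (numCopies H (erGraph ω) : ℝ) = ∑ A ∈ copies n H, (edgesPresent A).indicator 1 ω := by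
  classical
  have hset : {A : (⊤ : SimpleGraph (Fin n)).Subgraph |
        IsCopy H A ∧ A.edgeSet ⊆ (erGraph ω).edgeSet}
      = ↑({A ∈ copies n H | ω ∈ edgesPresent A} : Finset _) := by
    ext A
    rw [coe_filter]
    simp only [Set.mem_ofPred_eq, mem_copies, edgesPresent]
  rw [numCopies, hset, Set.ncard_coe_finset, card_filter, Nat.cast_sum]
  refine sum_congr rfl fun A _ => ?_
  by_cases h : ω ∈ edgesPresent A <;> simp [h]

lemma integral_numCopies (h0 : 0 ≤ p) (h1 : p ≤ 1) :
    ∫ ω, (numCopies H (erGraph ω) : ℝ) ∂erMeasure n p = #(copies n H) * p ^ H.edgeSet.ncard := by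
  simp only [numCopies_erGraph_eq_sum, integral_sum_indicator_edgesPresent _ h0 h1]
  rw [sum_congr rfl fun A hA => by rw [(mem_copies.1 hA).ncard_edgeSet], sum_const, nsmul_eq_mul]

lemma variance_numCopies_le (h0 : 0 ≤ p) (h1 : p ≤ 1) :
    variance (fun ω => (numCopies H (erGraph ω) : ℝ)) (erMeasure n p)
      ≤ ∑ k ∈ Icc 1 H.edgeSet.ncard, #(pairsSharing n H k) * p ^ (2 * H.edgeSet.ncard - k) := by
  classical
  simp only [numCopies_erGraph_eq_sum]
  refine (variance_sum_indicator_edgesPresent_le _ h0 h1).trans_eq ?_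
  rw [← sum_fiberwise_of_maps_to (t := Icc 1 H.edgeSet.ncard)
    (g := fun AB => sharedEdges AB.1 AB.2)]
  · refine sum_congr rfl fun k hk => ?_
    have hpairs : {AB ∈ {AB ∈ copies n H ×ˢ copies n H | sharedEdges AB.1 AB.2 ≠ 0} |
        sharedEdges AB.1 AB.2 = k} = pairsSharing n H k := by
      rw [filter_filter, pairsSharing]
      refine filter_congr fun AB _ => ?_
      have := (mem_Icc.1 hk).1
      exact ⟨fun h => h.2, fun h => ⟨by omega, h⟩⟩
    rw [← hpairs, ← nsmul_eq_mul, ← sum_const]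
    refine sum_congr rfl fun AB hAB => ?_
    simp only [mem_filter, mem_product, mem_copies] at hAB
    rw [hAB.1.1.1.ncard_edgeSet, hAB.1.1.2.ncard_edgeSet, hAB.2, two_mul]
  · intro AB hAB
    simp only [mem_filter, mem_product, mem_copies] at hAB
    exact mem_Icc.2 ⟨Nat.one_le_iff_ne_zero.2 hAB.2,
      hAB.1.1.ncard_edgeSet ▸ sharedEdges_le_ncard_edgeSet _ _⟩

end CopyMoments

lemma mul_rpow_neg_inv_pow (a : ℝ) {x : ℝ} (hx : 0 ≤ x) (α : ℝ) (k : ℕ) :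
    (a * x ^ (-α⁻¹)) ^ k = a ^ k * x ^ (-(k / α)) := by
  rw [mul_pow, ← Real.rpow_natCast (x ^ _), ← Real.rpow_mul hx, neg_mul, inv_mul_eq_div]

lemma inv_pow_le_of_mul_rpow_le {a x α p : ℝ} (ha : 0 < a) (hx : 0 < x)
    (hp : a * x ^ (-α⁻¹) ≤ p) (k : ℕ) : (p ^ k)⁻¹ ≤ a⁻¹ ^ k * x ^ (k / α) := by
  have hlow : a ^ k * x ^ (-(k / α)) ≤ p ^ k :=
    mul_rpow_neg_inv_pow a hx.le α k ▸ pow_le_pow_left₀ (by positivity) hp k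
  calc (p ^ k)⁻¹ ≤ (a ^ k * x ^ (-(k / α)))⁻¹ := inv_anti₀ (by positivity) hlow
    _ = a⁻¹ ^ k * x ^ (k / α) := by rw [mul_inv, inv_pow, Real.rpow_neg hx.le, inv_inv]

lemma eventually_half_mul_rpow_le {c α : ℝ} (hc : 0 < c) {p : ℕ → ℝ}
    (hpc : Tendsto (fun n : ℕ => p n / (c * (n : ℝ) ^ (-α⁻¹))) atTop (nhds 1)) :
    ∀ᶠ n : ℕ in atTop, c / 2 * (n : ℝ) ^ (-α⁻¹) ≤ p n := by
  filter_upwards [eventually_gt_atTop 0,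
    hpc.eventually_const_le (by norm_num : (1 : ℝ) / 2 < 1)] with n hn hpn
  rw [le_div_iff₀ (mul_pos hc (Real.rpow_pos_of_pos (by exact_mod_cast hn) _))] at hpn
  linarith

/-- `(2v)^{2v}` comes from counting pairs of copies, `(2^v v!)^2` bounds `n^{2v} / N^2`, and
`a⁻¹^k` bounds `n^{-k/α} / p^k` when `p ≥ a n^{-1/α}`. -/
noncomputable def concentrationConstant (v e : ℕ) (a : ℝ) : ℝ :=
  ∑ k ∈ Icc 1 e, (2 * v : ℝ) ^ (2 * v) * (2 ^ v * v.factorial) ^ 2 * a⁻¹ ^ k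

lemma concentrationConstant_pos {v e : ℕ} (hv : 0 < v) (he : 1 ≤ e) {a : ℝ} (ha : 0 < a) :
    0 < concentrationConstant v e a := by
  have hv' : (0 : ℝ) < v := by exact_mod_cast hv
  exact sum_pos (fun k _ => by positivity) ⟨1, mem_Icc.2 ⟨le_rfl, he⟩⟩

section Asymptotics
variable {V : Type*} [Fintype V] {n : ℕ} {H : SimpleGraph V} {p a α γ : ℝ}

lemma pow_le_card_copies (hn : 2 * Fintype.card V ≤ n) :
    n ^ Fintype.card V ≤ 2 ^ Fintype.card V * (Fintype.card V).factorial * #(copies n H) := by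
  set v := Fintype.card V
  calc n ^ v ≤ (2 * (n + 1 - v)) ^ v := Nat.pow_le_pow_left (by omega) v
    _ = 2 ^ v * (n + 1 - v) ^ v := mul_pow ..
    _ ≤ 2 ^ v * n.descFactorial v := Nat.mul_le_mul_left _ (Nat.pow_sub_le_descFactorial n v)
    _ = 2 ^ v * v.factorial * n.choose v := by
      rw [Nat.descFactorial_eq_factorial_mul_choose, mul_assoc]
    _ ≤ 2 ^ v * v.factorial * #(copies n H) := Nat.mul_le_mul_left _ choose_le_card_copies

lemma pow_mul_rpow_le_card_copies_mul_pow (hn₀ : 0 < n) (hn : 2 * Fintype.card V ≤ n)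
    (ha : 0 < a) (hp : a * (n : ℝ) ^ (-α⁻¹) ≤ p) :
    a ^ H.edgeSet.ncard * (n : ℝ) ^ ((Fintype.card V : ℝ) - H.edgeSet.ncard / α)
      ≤ 2 ^ Fintype.card V * (Fintype.card V).factorial
          * (#(copies n H) * p ^ H.edgeSet.ncard) := by
  have hN : ((n ^ Fintype.card V : ℕ) : ℝ)
      ≤ ((2 ^ Fintype.card V * (Fintype.card V).factorial * #(copies n H) : ℕ) : ℝ) := by
    exact_mod_cast pow_le_card_copies hn
  push_cast at hN
  have hpow := mul_rpow_neg_inv_pow a (Nat.cast_nonneg n) α H.edgeSet.ncard ▸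
    pow_le_pow_left₀ (by positivity) hp H.edgeSet.ncard
  rw [sub_eq_add_neg, Real.rpow_add (by exact_mod_cast hn₀), Real.rpow_natCast]
  calc _ = (n : ℝ) ^ Fintype.card V
        * (a ^ H.edgeSet.ncard * (n : ℝ) ^ (-(H.edgeSet.ncard / α))) := by ring
    _ ≤ 2 ^ Fintype.card V * (Fintype.card V).factorial * #(copies n H)
        * p ^ H.edgeSet.ncard := mul_le_mul hN hpow (by positivity) (by positivity)
    _ = _ := mul_assoc ..

lemma card_pairsSharing_mul_pow_le (hn₀ : 0 < n) (hn : 2 * Fintype.card V ≤ n) (hp₀ : 0 < p)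
    (ha : 0 < a) (hp : a * (n : ℝ) ^ (-α⁻¹) ≤ p) {k : ℕ} (hk : k ∈ sharedK H H n)
    (hγ : γ ≤ minSharedVerts H H n k - k / α) :
    #(pairsSharing n H k) * p ^ (2 * H.edgeSet.ncard - k)
      ≤ (2 * Fintype.card V) ^ (2 * Fintype.card V)
          * (2 ^ Fintype.card V * (Fintype.card V).factorial) ^ 2 * a⁻¹ ^ k
          * (n : ℝ) ^ (-γ) * (#(copies n H) * p ^ H.edgeSet.ncard) ^ 2 := by
  set v := Fintype.card V
  set e := H.edgeSet.ncard
  set ℓ := minSharedVerts H H n k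
  have hx : (0 : ℝ) < n := by exact_mod_cast hn₀
  have hℓ : ℓ ≤ 2 * v := by
    obtain ⟨A, B, hA, hB, -, hAB⟩ := exists_sharedVerts_eq_minSharedVerts hk
    have := ncard_verts_union_add_sharedVerts_le hA hB
    omega
  have hpairs : (#(pairsSharing n H k) : ℝ) ≤ (n : ℝ) ^ ((2 * v : ℝ) - ℓ) * (2 * v) ^ (2 * v) := by
    rw [← Nat.cast_ofNat, ← Nat.cast_mul, ← Nat.cast_sub hℓ, Real.rpow_natCast]
    exact_mod_cast card_pairsSharing_le hn
  have hsplit : p ^ (2 * e - k) = p ^ (2 * e) * (p ^ k)⁻¹ := by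
    have := (sharedK_subset_Icc hk).2
    rw [pow_sub₀ _ hp₀.ne' (by omega)]
  have hexp : (n : ℝ) ^ ((2 * v : ℝ) - ℓ) * (n : ℝ) ^ (k / α)
      ≤ (n : ℝ) ^ (-γ) * (n : ℝ) ^ (2 * v) := by
    rw [← Real.rpow_add hx, ← Real.rpow_natCast, ← Real.rpow_add hx]
    exact Real.rpow_le_rpow_of_exponent_le (by exact_mod_cast hn₀) (by push_cast; linarith)
  have hN : (n : ℝ) ^ (2 * v) ≤ (2 ^ v * v.factorial * #(copies n H)) ^ 2 := by
    rw [mul_comm, pow_mul]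
    exact pow_le_pow_left₀ (by positivity) (by exact_mod_cast pow_le_card_copies hn) 2
  calc #(pairsSharing n H k) * p ^ (2 * e - k)
      ≤ (n : ℝ) ^ ((2 * v : ℝ) - ℓ) * (2 * v) ^ (2 * v)
          * (p ^ (2 * e) * (a⁻¹ ^ k * (n : ℝ) ^ (k / α))) := by
        rw [hsplit]
        gcongr
        exact inv_pow_le_of_mul_rpow_le ha hx hp k
    _ = (2 * v) ^ (2 * v) * a⁻¹ ^ k * p ^ (2 * e)
          * ((n : ℝ) ^ ((2 * v : ℝ) - ℓ) * (n : ℝ) ^ (k / α)) := by ring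
    _ ≤ (2 * v) ^ (2 * v) * a⁻¹ ^ k * p ^ (2 * e)
          * ((n : ℝ) ^ (-γ) * (2 ^ v * v.factorial * #(copies n H)) ^ 2) :=
        mul_le_mul_of_nonneg_left
          (hexp.trans (mul_le_mul_of_nonneg_left hN (by positivity))) (by positivity)
    _ = _ := by ring

lemma variance_numCopies_le_rpow (hn₀ : 0 < n) (hn : 2 * Fintype.card V ≤ n) (hp₀ : 0 < p)
    (hp₁ : p ≤ 1) (ha : 0 < a) (hp : a * (n : ℝ) ^ (-α⁻¹) ≤ p)
    (hγ : ∀ k ∈ sharedK H H n, γ ≤ minSharedVerts H H n k - k / α) :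
    variance (fun ω => (numCopies H (erGraph ω) : ℝ)) (erMeasure n p)
      ≤ concentrationConstant (Fintype.card V) H.edgeSet.ncard a * (n : ℝ) ^ (-γ)
          * (#(copies n H) * p ^ H.edgeSet.ncard) ^ 2 := by
  refine (variance_numCopies_le hp₀.le hp₁).trans ?_
  rw [concentrationConstant, sum_mul, sum_mul]
  refine sum_le_sum fun k hk => ?_
  by_cases hK : k ∈ sharedK H H n
  · exact card_pairsSharing_mul_pow_le hn₀ hn hp₀ ha hp hK (hγ k hK)
  · rw [pairsSharing_eq_empty (mem_Icc.1 hk).1 hK, card_empty, Nat.cast_zero, zero_mul]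
    positivity

lemma measureReal_abs_numCopies_div_sub_one_ge_le (hn₀ : 0 < n) (hn : 2 * Fintype.card V ≤ n)
    (hp₀ : 0 < p) (hp₁ : p ≤ 1) (ha : 0 < a) (hp : a * (n : ℝ) ^ (-α⁻¹) ≤ p)
    (hγ : ∀ k ∈ sharedK H H n, γ ≤ minSharedVerts H H n k - k / α) {ε : ℝ} (hε : 0 < ε) :
    (erMeasure n p).real {ω | ε ≤ |(numCopies H (erGraph ω) : ℝ)
        / (#(copies n H) * p ^ H.edgeSet.ncard) - 1|}
      ≤ concentrationConstant (Fintype.card V) H.edgeSet.ncard a * ε ^ (-2 : ℤ)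
          * (n : ℝ) ^ (-γ) := by
  have := isProbabilityMeasure_erMeasure (n := n) hp₀.le hp₁
  have hmean := integral_numCopies (n := n) (H := H) hp₀.le hp₁
  have hN : 0 < #(copies n H) := (Nat.choose_pos (by omega)).trans_le choose_le_card_copies
  have hm : (0 : ℝ) < #(copies n H) * p ^ H.edgeSet.ncard := by positivity
  calc _ ≤ variance (fun ω => (numCopies H (erGraph ω) : ℝ)) (erMeasure n p)
        / (ε * (#(copies n H) * p ^ H.edgeSet.ncard)) ^ 2 :=
      hmean ▸ measureReal_abs_div_sub_one_ge_le MemLp.of_discrete (hmean ▸ hm) hε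
    _ ≤ concentrationConstant (Fintype.card V) H.edgeSet.ncard a * (n : ℝ) ^ (-γ)
          * (#(copies n H) * p ^ H.edgeSet.ncard) ^ 2
        / (ε * (#(copies n H) * p ^ H.edgeSet.ncard)) ^ 2 := by
      gcongr
      exact variance_numCopies_le_rpow hn₀ hn hp₀ hp₁ ha hp hγ
    _ = _ := by
      rw [zpow_neg, zpow_ofNat]
      field_simp

lemma tendsto_card_copies_mul_pow {p : ℕ → ℝ} (hα : 0 < α)
    (hdens : (H.edgeSet.ncard : ℝ) < α * Fintype.card V) (ha : 0 < a)
    (hp : ∀ᶠ n : ℕ in atTop, a * (n : ℝ) ^ (-α⁻¹) ≤ p n) :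
    Tendsto (fun n => #(copies n H) * p n ^ H.edgeSet.ncard) atTop atTop := by
  have hδ : 0 < (Fintype.card V : ℝ) - H.edgeSet.ncard / α := by
    rw [sub_pos, div_lt_iff₀ hα, mul_comm]
    exact hdens
  refine tendsto_atTop_mono' atTop ?_ <| (((tendsto_rpow_atTop hδ).comp
    tendsto_natCast_atTop_atTop).const_mul_atTop (by positivity :
      0 < a ^ H.edgeSet.ncard / (2 ^ Fintype.card V * (Fintype.card V).factorial)))
  filter_upwards [hp, eventually_gt_atTop 0, eventually_ge_atTop (2 * Fintype.card V)]
    with n hpn hn₀ hn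
  rw [Function.comp_apply, div_mul_eq_mul_div, div_le_iff₀' (by positivity)]
  exact pow_mul_rpow_le_card_copies_mul_pow hn₀ hn ha hpn

end Asymptotics

theorem subcritical_density_concentration_general
    (c α : ℝ) (hc : 0 < c) (hα : 0 < α)
    (p : ℕ → ℝ) (hp : ∀ n, 0 < p n ∧ p n < 1)
    -- `p = c n^{-1/α} (1 + o(1))`
    (hpc : Tendsto (fun n : ℕ => p n / (c * (n : ℝ) ^ (-α⁻¹ : ℝ))) atTop (nhds 1))
    (v : ℕ) (H : SimpleGraph (Fin v)) (hv : 0 < v)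
    (he : H.edgeSet.Nonempty)
    (hbal : StrictlyBalanced H)
    -- `d_H < α`
    (hdens : (H.edgeSet.ncard : ℝ) / (v : ℝ) < α)
    (W : (n : ℕ) → EdgeSpace n → ℕ)
    (hWdef : ∀ n ω, W n ω = numCopies H (erGraph ω))
    (EW : ℕ → ℝ) (hEW : ∀ n, EW n = ∫ ω, (W n ω : ℝ) ∂erMeasure n (p n))
    -- `γ(n) = min_{k ∈ K} (ℓ_k − k/α)`
    (γ : ℕ → ℝ)
    (hγ : ∀ n, γ n = sInf {x : ℝ | ∃ k ∈ sharedK H H n,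
      x = (minSharedVerts H H n k : ℝ) - (k : ℝ) / α}) :
    Tendsto EW atTop atTop
      ∧ (∀ᶠ n in atTop, 0 < γ n)
      ∧ ∃ C > (0 : ℝ), ∀ ε > (0 : ℝ), ∀ᶠ n in atTop,
          (erMeasure n (p n) {ω | ε ≤ |(W n ω : ℝ) / EW n - 1|}).toReal
            ≤ C * ε ^ (-2 : ℤ) * (n : ℝ) ^ (-γ n) := by
  have hW : ∀ n, (fun ω => (W n ω : ℝ)) = fun ω => (numCopies H (erGraph ω) : ℝ) :=
    fun n => funext fun ω => by rw [hWdef]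
  have hEW' : EW = fun n => #(copies n H) * p n ^ H.edgeSet.ncard := funext fun n => by
    rw [hEW, hW, integral_numCopies (hp n).1.le (hp n).2.le]
  have hdens' : (H.edgeSet.ncard : ℝ) < α * Fintype.card (Fin v) := by
    rw [Fintype.card_fin]
    exact (div_lt_iff₀ (by exact_mod_cast hv)).1 hdens
  have hplow := eventually_half_mul_rpow_le hc hpc
  refine ⟨hEW' ▸ tendsto_card_copies_mul_pow hα hdens' (by positivity) hplow, ?_,
    concentrationConstant v H.edgeSet.ncard (c / 2),
    concentrationConstant_pos hv ((Set.ncard_pos (Set.toFinite _)).2 he) (by positivity),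
    fun ε hε => ?_⟩
  · filter_upwards [eventually_ge_atTop v] with n hn
    rw [hγ]
    exact sInf_sharedK_pos hbal he hα hdens' (by simpa using hn)
  · filter_upwards [hplow, eventually_gt_atTop 0, eventually_ge_atTop (2 * v)]
      with n hpn hn₀ hn
    have hγle : ∀ k ∈ sharedK H H n, γ n ≤ minSharedVerts H H n k - k / α :=
      fun k hk => hγ n ▸ sInf_sharedK_le hk
    have hbound := measureReal_abs_numCopies_div_sub_one_ge_le hn₀ (by simpa using hn) (hp n).1
      (hp n).2.le (by positivity) hpn hγle hε
    rw [Fintype.card_fin] at hbound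
    simp only [hWdef, hEW']
    exact hbound

/-- For a strictly balanced graph `H` of density `d_H < α` and
`p = c n^{-1/α} (1 + o(1))`, the count `W` of copies of `H` satisfies `E(W) → ∞` and a
second-moment concentration bound `P(|W/E(W) − 1| ≥ ε) ≤ C ε^{-2} n^{-γ}` with
`γ = min_{k ∈ K} (ℓ_k − k/α) > 0`. -/
theorem subcritical_density_concentration
    (c α : ℝ) (hc : 0 < c) (hα : 0 < α)
    (p : ℕ → ℝ) (hp : ∀ n, 0 < p n ∧ p n < 1)
    -- `p = c n^{-1/α} (1 + o(1))`
    (hpc : Tendsto (fun n : ℕ => p n / (c * (n : ℝ) ^ (-α⁻¹ : ℝ))) atTop (nhds 1))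
    (v : ℕ) (H : SimpleGraph (Fin v)) (hv : 0 < v)
    (he : H.edgeSet.Nonempty)
    (hnoiso : ∀ x, ∃ y, H.Adj x y)
    (hbal : StrictlyBalanced H)
    -- `d_H < α`
    (hdens : (H.edgeSet.ncard : ℝ) / (v : ℝ) < α)
    (W : (n : ℕ) → EdgeSpace n → ℕ)
    (hWdef : ∀ n ω, W n ω = numCopies H (erGraph ω))
    (EW : ℕ → ℝ) (hEW : ∀ n, EW n = ∫ ω, (W n ω : ℝ) ∂erMeasure n (p n))
    -- `γ(n) = min_{k ∈ K} (ℓ_k − k/α)`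
    (γ : ℕ → ℝ)
    (hγ : ∀ n, γ n = sInf {x : ℝ | ∃ k ∈ sharedK H H n,
      x = (minSharedVerts H H n k : ℝ) - (k : ℝ) / α}) :
    Tendsto EW atTop atTop
      ∧ (∀ᶠ n in atTop, 0 < γ n)
      ∧ ∃ C > (0 : ℝ), ∀ ε > (0 : ℝ), ∀ᶠ n in atTop,
          (erMeasure n (p n) {ω | ε ≤ |(W n ω : ℝ) / EW n - 1|}).toReal
            ≤ C * ε ^ (-2 : ℤ) * (n : ℝ) ^ (-γ n) :=
  subcritical_density_concentration_general c α hc hα p hp hpc v H hv he hbal hdens W hWdef EW hEW γ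
    hγ
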